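/- arXiv:2002.09985 — 2 statements merged into one kernel-verified Lean document; each statement's English description precedes it below -/
import Mathlib

section
/- Let P_A, P_B be orthogonal projections on a Hilbert space H with I - P_{B'} ≤ P_B in the appropriate sense, and Σ bounded self-adjoint with Σ² ≤ I, Σ_{B'} = P_{B'}ΣP_{B'}. Then P_A(P_{B'} - Σ_{B'}²)P_A ≤ (P_A + |P_B Σ P_A|)², where |T| := (T*T)^{1/2}. -/
/-!
Write `T := P_B Σ P_A`. Because `P_A ≤ P_{B'}`, the left-hand side collapses to
`P_A - P_A Σ P_{B'} Σ P_A`, while `|T|² = T*T = P_A Σ² P_A - P_A Σ P_{B'} Σ P_A`. Since `T` ends in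
`P_A`, so does `|T|` (in a C*-algebra `a* a b = a* a` forces `a b = a`), hence
`(P_A + |T|)² = P_A + 2|T| + |T|²` and the difference of the two sides is `2|T| + P_A Σ² P_A ≥ 0`.
-/

open ContinuousLinearMap

theorem CStarRing.mul_eq_left_of_star_mul_self_mul {A : Type*} [NormedRing A] [StarRing A]
    [CStarRing A] {a b : A} (h : star a * a * b = star a * a) : a * b = a := by
  have : star (a * (1 - b)) * (a * (1 - b)) = 0 := by
    rw [star_mul, mul_assoc, ← mul_assoc (star a), mul_sub, mul_one, h, sub_self, mul_zero]
  rw [CStarRing.star_mul_self_eq_zero_iff, mul_sub, mul_one, sub_eq_zero] at this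
  exact this.symm

section Ring

variable {R : Type*} [Ring R] {p q : R}

theorem IsIdempotentElem.mul_sub_compression_sq_mul (hp : IsIdempotentElem p)
    (hq : IsIdempotentElem q) (hpq : p * q = p) (hqp : q * p = p) (s : R) :
    p * (q - (q * s * q) ^ 2) * p = p - p * s * q * s * p := by
  rw [sq, mul_sub, sub_mul, hpq, hp.eq]
  simp only [← mul_assoc, hpq]
  rw [mul_assoc _ q p, hqp, mul_assoc _ q q, hq.eq]

theorem IsIdempotentElem.add_sq_of_mul_eq_of_mul_eq (hp : IsIdempotentElem p) {t : R}
    (hpt : p * t = t) (htp : t * p = t) : (p + t) ^ 2 = p + t + t + t ^ 2 := by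
  rw [sq, sq, add_mul, mul_add, mul_add, hp.eq, hpt, htp]
  abel

end Ring

theorem IsStarProjection.star_one_sub_mul_mul_self {R : Type*} [Ring R] [StarRing R] {p q s : R}
    (hq : IsStarProjection q) (hs : IsSelfAdjoint s) (hp : IsSelfAdjoint p) :
    star ((1 - q) * s * p) * ((1 - q) * s * p) = p * s * s * p - p * s * q * s * p := by
  have hq' := hq.one_sub
  rw [star_mul, star_mul, hq'.isSelfAdjoint.star_eq, hs.star_eq, hp.star_eq]
  calc p * (s * (1 - q)) * ((1 - q) * s * p) = p * s * ((1 - q) * (1 - q)) * s * p := by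
        simp only [mul_assoc]
    _ = p * s * s * p - p * s * q * s * p := by
        rw [hq'.isIdempotentElem.eq]; noncomm_ring

theorem projection_sandwich_le_sq_general {H : Type*} [NormedAddCommGroup H]
    [InnerProductSpace ℂ H] [CompleteSpace H]
    (PA PB' Sig absT : H →L[ℂ] H)
    (hPA : IsIdempotentElem PA) (hPAsa : IsSelfAdjoint PA)
    (hPB' : IsIdempotentElem PB') (hPB'sa : IsSelfAdjoint PB')
    (hle : PA * PB' = PA)
    (hSig : IsSelfAdjoint Sig)
    (hSig0 : (Sig ^ 2).IsPositive)
    (habs : absT.IsPositive)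
    (habs2 : absT ^ 2 =
      adjoint ((1 - PB') * Sig * PA) * ((1 - PB') * Sig * PA)) :
    ((PA + absT) ^ 2 - PA * (PB' - (PB' * Sig * PB') ^ 2) * PA).IsPositive := by
  have hTsa : IsSelfAdjoint absT := habs.isSelfAdjoint
  have hPB'PA : PB' * PA = PA := by
    simpa only [star_mul, hPAsa.star_eq, hPB'sa.star_eq] using congrArg star hle
  have hTPA : absT * PA = absT := by
    refine CStarRing.mul_eq_left_of_star_mul_self_mul ?_
    rw [hTsa.star_eq, ← sq, habs2, mul_assoc, mul_assoc ((1 - PB') * Sig), hPA.eq]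
  have hPAT : PA * absT = absT := by
    simpa only [star_mul, hPAsa.star_eq, hTsa.star_eq] using congrArg star hTPA
  have habs2' : absT ^ 2 = PA * Sig * Sig * PA - PA * Sig * PB' * Sig * PA := by
    rw [habs2, ← star_eq_adjoint,
      (IsStarProjection.mk hPB' hPB'sa).star_one_sub_mul_mul_self hSig hPAsa]
  have hconj : (PA * Sig * Sig * PA).IsPositive := by
    simpa only [hPAsa.adjoint_eq, ← mul_def, sq, ← mul_assoc] using hSig0.adjoint_conj PA
  rw [hPA.add_sq_of_mul_eq_of_mul_eq hPAT hTPA, hPA.mul_sub_compression_sq_mul hPB' hle hPB'PA,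
    habs2']
  convert (habs.add habs).add hconj using 1
  abel

/-- Let `P_A ≤ P_{B'}` be orthogonal projections on a complex Hilbert space,
`P_B := I - P_{B'}`, and `Σ` bounded self-adjoint with `0 ≤ Σ² ≤ I`;
set `Σ_{B'} := P_{B'} Σ P_{B'}`.  Then
`P_A (P_{B'} - Σ_{B'}²) P_A ≤ (P_A + |P_B Σ P_A|)²`, where `|T| := (T^* T)^{1/2}`. -/
theorem projection_sandwich_le_sq {H : Type*} [NormedAddCommGroup H]
    [InnerProductSpace ℂ H] [CompleteSpace H]
    (PA PB' Sig absT : H →L[ℂ] H)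
    (hPA : IsIdempotentElem PA) (hPAsa : IsSelfAdjoint PA)
    (hPB' : IsIdempotentElem PB') (hPB'sa : IsSelfAdjoint PB')
    (hle : PA * PB' = PA)
    (hSig : IsSelfAdjoint Sig)
    (hSig0 : (Sig ^ 2).IsPositive) (hSig1 : (1 - Sig ^ 2).IsPositive)
    (habs : absT.IsPositive)
    (habs2 : absT ^ 2 =
      adjoint ((1 - PB') * Sig * PA) * ((1 - PB') * Sig * PA)) :
    ((PA + absT) ^ 2 - PA * (PB' - (PB' * Sig * PB') ^ 2) * PA).IsPositive :=
  projection_sandwich_le_sq_general PA PB' Sig absT hPA hPAsa hPB' hPB'sa hle hSig hSig0 habs habs2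
end

section
/- With the hypotheses of the finite-propagation-speed lemma, taking F(ω) = tanh(βω/2) with Fourier sine density F̃(s) = (π/β)csch(πs/β), one obtains ‖(I - X̂) tanh(β√L/2) X‖ ≤ -(1/π)‖1-χ̂‖_∞‖χ‖_∞ · ln|tanh(π r/(2β))| where r = dist(supp χ, supp(1-χ̂)). -/
/-!
Below the propagation distance `r` the sandwiched wave operators `(1 - X̂) sin (s √L) X` vanish,
so in the sine-transform representation of `tanh (β √L / 2)` only times `s ≥ r` contribute, each
with operator norm at most `‖1 - X̂‖ ‖X‖` times the density. The tail of the density has a closed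
form because `log (tanh (c s / 2))` is an antiderivative of `c csch (c s)` vanishing at infinity.
-/

open MeasureTheory ContinuousLinearMap Real
open Filter Set Topology

theorem Real.tendsto_tanh_atTop : Tendsto tanh atTop (𝓝 1) := by
  have hlower : ∀ x, 1 - exp (-x) ≤ tanh x := fun x => by
    rw [tanh_eq_sinh_div_cosh, le_div_iff₀ (cosh_pos x)]
    nlinarith [cosh_sub_sinh x, one_le_cosh x, exp_pos (-x)]
  have hexp : Tendsto (fun x => 1 - exp (-x)) atTop (𝓝 1) := by
    simpa using tendsto_exp_neg_atTop_nhds_zero.const_sub 1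
  exact tendsto_of_tendsto_of_tendsto_of_le_of_le hexp tendsto_const_nhds hlower
    fun x => (tanh_lt_one x).le

theorem Real.hasDerivAt_log_tanh {x : ℝ} (hx : 0 < x) :
    HasDerivAt (fun y => log (tanh y)) (2 / sinh (2 * x)) x := by
  have hs : 0 < sinh x := sinh_pos_iff.2 hx
  have hc : 0 < cosh x := cosh_pos x
  have h := ((hasDerivAt_sinh x).div (hasDerivAt_cosh x) hc.ne').log (div_pos hs hc).ne'
  rw [show tanh = sinh / cosh from funext tanh_eq_sinh_div_cosh]
  refine h.congr_deriv ?_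
  rw [Pi.div_apply, sinh_two_mul]
  field_simp
  nlinarith [cosh_sq x]

theorem hasDerivAt_log_tanh_mul_half {c x : ℝ} (hc : 0 < c) (hx : 0 < x) :
    HasDerivAt (fun s => log (tanh (c * s / 2))) (c * (sinh (c * x))⁻¹) x := by
  have h := (hasDerivAt_log_tanh (by positivity : 0 < c * x / 2)).comp x
    (((hasDerivAt_id x).const_mul c).div_const 2)
  refine h.congr_deriv ?_
  rw [show 2 * (c * x / 2) = c * x by ring]
  field_simp

theorem tendsto_log_tanh_mul_half_atTop {c : ℝ} (hc : 0 < c) :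
    Tendsto (fun s => log (tanh (c * s / 2))) atTop (𝓝 0) := by
  have h := ((continuousAt_log one_ne_zero).tendsto.comp tendsto_tanh_atTop).comp
    ((tendsto_id.const_mul_atTop hc).atTop_div_const two_pos)
  simpa [Function.comp_def] using h

theorem integrableOn_Ioi_mul_inv_sinh {c r : ℝ} (hc : 0 < c) (hr : 0 < r) :
    IntegrableOn (fun s => c * (sinh (c * s))⁻¹) (Ioi r) := by
  refine integrableOn_Ioi_deriv_of_nonneg' (fun x hx => hasDerivAt_log_tanh_mul_half hc ?_)
    (fun x hx => ?_) (tendsto_log_tanh_mul_half_atTop hc)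
  · exact hr.trans_le hx
  · have := sinh_pos_iff.2 (mul_pos hc (hr.trans hx))
    positivity

theorem integral_Ioi_mul_inv_sinh {c r : ℝ} (hc : 0 < c) (hr : 0 < r) :
    ∫ s in Ioi r, c * (sinh (c * s))⁻¹ = -log (tanh (c * r / 2)) := by
  rw [integral_Ioi_of_hasDerivAt_of_tendsto'
    (fun x hx => hasDerivAt_log_tanh_mul_half hc (hr.trans_le hx))
    (integrableOn_Ioi_mul_inv_sinh hc hr) (tendsto_log_tanh_mul_half_atTop hc), zero_sub]

theorem norm_mul_setIntegral_smul_mul_le {A : Type*} [NormedRing A] [NormedAlgebra ℝ A]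
    [CompleteSpace A] {a b : A} {g : ℝ → ℝ} {W : ℝ → A} {r : ℝ} (hr : 0 < r)
    (hW : ∀ s, ‖W s‖ ≤ 1) (hvanish : ∀ s ∈ Ioo 0 r, a * W s * b = 0)
    (hgW : IntegrableOn (fun s => g s • W s) (Ioi 0)) (hg : IntegrableOn g (Ioi r)) :
    ‖a * (∫ s in Ioi 0, g s • W s) * b‖ ≤ ‖a‖ * ‖b‖ * ∫ s in Ioi r, |g s| := by
  have hcomm : a * (∫ s in Ioi 0, g s • W s) * b = ∫ s in Ioi 0, g s • (a * W s * b) := by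
    rw [← mulLeftRight_apply ℝ A a b, ← (mulLeftRight ℝ A a b).integral_comp_comm hgW]
    simp only [mulLeftRight_apply, mul_smul_comm, smul_mul_assoc]
  have htail : ∫ s in Ioi 0, g s • (a * W s * b) = ∫ s in Ioi r, g s • (a * W s * b) := by
    rw [← integral_Ici_eq_integral_Ioi (x := r)]
    refine setIntegral_eq_of_subset_of_forall_sdiff_eq_zero measurableSet_Ioi
      (Ici_subset_Ioi.2 hr) fun s hs => ?_
    rw [hvanish s ⟨hs.1, not_le.1 hs.2⟩, smul_zero]
  rw [hcomm, htail, ← integral_const_mul]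
  refine norm_integral_le_of_norm_le (hg.norm.const_mul _) (ae_of_all _ fun s => ?_)
  calc ‖g s • (a * W s * b)‖ = |g s| * ‖a * W s * b‖ := by rw [norm_smul, norm_eq_abs]
    _ ≤ |g s| * (‖a‖ * 1 * ‖b‖) := by
      gcongr
      exact (norm_mul₃_le ..).trans (by gcongr; exact hW s)
    _ = ‖a‖ * ‖b‖ * ‖g s‖ := by rw [norm_eq_abs]; ring

/-- `W s` models `sin (s √L)` and `FL` is `tanh (β √L / 2)`, written through its sine transform
with density `(π/β) csch (π s / β)`. -/
theorem finite_propagation_speed_tanh_bound {H : Type*} [NormedAddCommGroup H]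
    [InnerProductSpace ℂ H] [CompleteSpace H]
    (β : ℝ) (hβ : 0 < β)
    (X Xhat : H →L[ℂ] H) (r : ℝ) (hr : 0 < r)
    (W : ℝ → (H →L[ℂ] H)) (hW : ∀ s, ‖W s‖ ≤ 1)
    (hprop : ∀ s, 0 ≤ s → s < r → (1 - Xhat) * W s * X = 0)
    (hint : IntegrableOn
      (fun s => ((π / β) * (Real.sinh (π * s / β))⁻¹) • W s) (Set.Ioi (0 : ℝ)))
    (FL : H →L[ℂ] H)
    (hFL : FL = (1 / π) •
      ∫ s in Set.Ioi (0 : ℝ), ((π / β) * (Real.sinh (π * s / β))⁻¹) • W s) :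
    ‖(1 - Xhat) * FL * X‖ ≤
      -(1 / π) * ‖1 - Xhat‖ * ‖X‖ * Real.log |Real.tanh (π * r / (2 * β))| := by
  have hc : 0 < π / β := div_pos pi_pos hβ
  simp_rw [mul_div_right_comm π _ β] at hint hFL
  have hcsch : ∫ s in Ioi r, |π / β * (sinh (π / β * s))⁻¹| = -log (tanh (π / β * r / 2)) := by
    rw [← integral_Ioi_mul_inv_sinh hc hr]
    refine setIntegral_congr_fun measurableSet_Ioi fun s hs => abs_of_pos ?_
    have := sinh_pos_iff.2 (mul_pos hc (hr.trans hs))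
    positivity
  calc ‖(1 - Xhat) * FL * X‖
      = 1 / π * ‖(1 - Xhat) * (∫ s in Ioi 0, (π / β * (sinh (π / β * s))⁻¹) • W s) * X‖ := by
        rw [hFL, mul_smul_comm, smul_mul_assoc, norm_smul, norm_of_nonneg (by positivity)]
    _ ≤ 1 / π * (‖1 - Xhat‖ * ‖X‖ * -log (tanh (π / β * r / 2))) := by
        rw [← hcsch]
        gcongr
        exact norm_mul_setIntegral_smul_mul_le hr hW (fun s hs => hprop s hs.1.le hs.2) hint
          (integrableOn_Ioi_mul_inv_sinh hc hr)
    _ = _ := by rw [log_abs, show π / β * r / 2 = π * r / (2 * β) by ring]; ring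
end
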